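/- arXiv:1209.1221 — 3 statements merged into one kernel-verified Lean document; each statement's English description precedes it below -/
import Mathlib

section
/- There exists a subset of the natural numbers with positive lower density that contains no subset possessing a density (i.e., no subset whose lower and upper densities coincide and are positive). More precisely: there exists A ⊆ ℕ with positive lower density such that no subset B ⊆ A has positive natural density. -/
/-!
Let `A` be the union of the blocks `(4^i, 2·4^i]`. Every `[0, n]` with `n ≥ 2` contains a whole
block of length more than `n/8`, so `A` has lower density at least `1/8`. On the other hand `A`
misses `(n, 2n]` for every `n = 2·4^i`, so the counting function of any `B ⊆ A` satisfies
`|B ∩ [0, 2n]| / 2n = (|B ∩ [0, n]| / n) / 2` along these `n`; if the ratios converged to some `d`,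
then `d = d / 2`, i.e. `d = 0`.
-/

open Filter Topology

open scoped Classical in
noncomputable def upperDensity (A : Set ℕ) : ℝ :=
  Filter.limsup (fun n : ℕ => (((Finset.range (n + 1)).filter (fun m => m ∈ A)).card : ℝ) / n) Filter.atTop

open scoped Classical in
noncomputable def lowerDensity (A : Set ℕ) : ℝ :=
  Filter.liminf (fun n : ℕ => (((Finset.range (n + 1)).filter (fun m => m ∈ A)).card : ℝ) / n) Filter.atTop

open Set

section CountingRatio

open scoped Classical in
noncomputable def countUpTo (S : Set ℕ) (n : ℕ) : ℕ :=
  ((Finset.range (n + 1)).filter (fun m => m ∈ S)).card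

noncomputable def countingRatio (S : Set ℕ) (n : ℕ) : ℝ := (countUpTo S n : ℝ) / n

variable {S : Set ℕ}

theorem lowerDensity_eq_liminf_countingRatio (S : Set ℕ) :
    lowerDensity S = liminf (countingRatio S) atTop := rfl

theorem countUpTo_le (S : Set ℕ) (n : ℕ) : countUpTo S n ≤ n + 1 := by
  classical
  exact (Finset.card_filter_le _ _).trans_eq (Finset.card_range _)

theorem countingRatio_nonneg (S : Set ℕ) (n : ℕ) : 0 ≤ countingRatio S n := by
  unfold countingRatio; positivity

theorem countingRatio_le_two (S : Set ℕ) (n : ℕ) : countingRatio S n ≤ 2 := by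
  rcases Nat.eq_zero_or_pos n with rfl | hn
  · simp [countingRatio]
  · have hcount : (countUpTo S n : ℝ) ≤ n + 1 := by exact_mod_cast countUpTo_le S n
    have hn1 : (1 : ℝ) ≤ n := by exact_mod_cast hn
    rw [countingRatio, div_le_iff₀ (by positivity)]
    linarith

theorem isBoundedUnder_le_countingRatio (S : Set ℕ) :
    IsBoundedUnder (· ≤ ·) atTop (countingRatio S) :=
  isBoundedUnder_of ⟨2, countingRatio_le_two S⟩

theorem isBoundedUnder_ge_countingRatio (S : Set ℕ) :
    IsBoundedUnder (· ≥ ·) atTop (countingRatio S) :=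
  isBoundedUnder_of ⟨0, countingRatio_nonneg S⟩

theorem tendsto_countingRatio_of_lowerDensity_eq_upperDensity
    (h : lowerDensity S = upperDensity S) :
    Tendsto (countingRatio S) atTop (𝓝 (lowerDensity S)) :=
  tendsto_of_liminf_eq_limsup rfl h.symm (isBoundedUnder_le_countingRatio S)
    (isBoundedUnder_ge_countingRatio S)

theorem le_lowerDensity_of_eventually_le_countUpTo {c : ℝ}
    (h : ∀ᶠ n in atTop, c * n ≤ countUpTo S n) : c ≤ lowerDensity S := by
  rw [lowerDensity_eq_liminf_countingRatio]
  refine le_liminf_of_le (isBoundedUnder_le_countingRatio S).isCoboundedUnder_ge ?_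
  filter_upwards [h, eventually_gt_atTop 0] with n hn hpos
  rwa [countingRatio, le_div_iff₀ (by exact_mod_cast hpos)]

theorem le_countUpTo_of_Ioc_subset {a n : ℕ} (h : Ioc a (2 * a) ⊆ S) (hn : 2 * a ≤ n) :
    a ≤ countUpTo S n := by
  classical
  calc a = (Finset.Ioc a (2 * a)).card := by rw [Nat.card_Ioc]; omega
    _ ≤ countUpTo S n := by
      refine Finset.card_le_card fun m hm => ?_
      rw [Finset.mem_Ioc] at hm
      exact Finset.mem_filter.mpr ⟨Finset.mem_range.mpr (by omega), h hm⟩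

theorem countUpTo_two_mul_of_disjoint {n : ℕ} (h : Disjoint S (Ioc n (2 * n))) :
    countUpTo S (2 * n) = countUpTo S n := by
  unfold countUpTo
  congr 1
  ext m
  simp only [Finset.mem_filter, Finset.mem_range]
  constructor
  · rintro ⟨hm, hmS⟩
    have hgap : ¬(n < m ∧ m ≤ 2 * n) := disjoint_left.mp h hmS
    exact ⟨by omega, hmS⟩
  · rintro ⟨hm, hmS⟩
    exact ⟨by omega, hmS⟩

theorem countingRatio_two_mul_of_disjoint {n : ℕ} (h : Disjoint S (Ioc n (2 * n))) :
    countingRatio S (2 * n) = countingRatio S n / 2 := by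
  rw [countingRatio, countingRatio, countUpTo_two_mul_of_disjoint h, Nat.cast_mul,
    Nat.cast_ofNat, div_div, mul_comm]

theorem eq_zero_of_tendsto_countingRatio_of_frequently_disjoint {d : ℝ}
    (hS : Tendsto (countingRatio S) atTop (𝓝 d))
    (hgaps : ∃ᶠ n in atTop, Disjoint S (Ioc n (2 * n))) : d = 0 := by
  obtain ⟨φ, hφ, hφgap⟩ := extraction_of_frequently_atTop hgaps
  have hφ2 : Tendsto (fun k => 2 * φ k) atTop atTop :=
    tendsto_atTop_mono (fun k => by omega) hφ.tendsto_atTop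
  have hhalf : Tendsto (fun k => countingRatio S (2 * φ k)) atTop (𝓝 (d / 2)) := by
    simpa only [Function.comp_def, countingRatio_two_mul_of_disjoint (hφgap _)] using
      (hS.comp hφ.tendsto_atTop).div_const 2
  have : d = d / 2 := tendsto_nhds_unique (hS.comp hφ2) hhalf
  linarith

end CountingRatio

def powFourBlocks : Set ℕ := ⋃ i, Ioc (4 ^ i) (2 * 4 ^ i)

theorem disjoint_powFourBlocks_Ioc (k : ℕ) :
    Disjoint powFourBlocks (Ioc (2 * 4 ^ k) (2 * (2 * 4 ^ k))) := by
  refine disjoint_left.mpr fun m hm hgap => ?_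
  obtain ⟨i, hi⟩ := mem_iUnion.mp hm
  rw [mem_Ioc] at hi hgap
  rcases le_or_gt i k with hik | hki
  · have : 4 ^ i ≤ 4 ^ k := Nat.pow_le_pow_right (by norm_num) hik
    omega
  · have : 4 ^ (k + 1) ≤ 4 ^ i := Nat.pow_le_pow_right (by norm_num) hki
    rw [pow_succ] at this
    omega

theorem frequently_disjoint_powFourBlocks_Ioc :
    ∃ᶠ n in atTop, Disjoint powFourBlocks (Ioc n (2 * n)) :=
  frequently_atTop.mpr fun k =>
    ⟨2 * 4 ^ k, by have : k < 4 ^ k := Nat.lt_pow_self (by norm_num); omega,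
      disjoint_powFourBlocks_Ioc k⟩

theorem exists_Ioc_subset_powFourBlocks {n : ℕ} (hn : 2 ≤ n) :
    ∃ a, 2 * a ≤ n ∧ n < 8 * a ∧ Ioc a (2 * a) ⊆ powFourBlocks := by
  set i := Nat.log 4 (n / 2)
  have hle : 4 ^ i ≤ n / 2 := Nat.pow_log_le_self 4 (by omega)
  have hlt : n / 2 < 4 ^ (i + 1) := Nat.lt_pow_succ_log_self (by norm_num) _
  rw [pow_succ] at hlt
  exact ⟨4 ^ i, by omega, by omega, subset_iUnion (fun j => Ioc (4 ^ j) (2 * 4 ^ j)) i⟩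

theorem one_eighth_le_lowerDensity_powFourBlocks : 1 / 8 ≤ lowerDensity powFourBlocks := by
  refine le_lowerDensity_of_eventually_le_countUpTo ?_
  filter_upwards [eventually_ge_atTop 2] with n hn
  obtain ⟨a, ha2, ha8, hsub⟩ := exists_Ioc_subset_powFourBlocks hn
  have hcount : (a : ℝ) ≤ countUpTo powFourBlocks n := by
    exact_mod_cast le_countUpTo_of_Ioc_subset hsub ha2
  have : (n : ℝ) < 8 * a := by exact_mod_cast ha8
  linarith

theorem exists_pos_lowerDensity_no_subset_with_density :
    ∃ A : Set ℕ, 0 < lowerDensity A ∧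
      ∀ B ⊆ A, ¬ (0 < lowerDensity B ∧ lowerDensity B = upperDensity B) := by
  refine ⟨powFourBlocks, by linarith [one_eighth_le_lowerDensity_powFourBlocks], ?_⟩
  rintro B hB ⟨hpos, hdensity⟩
  have hgaps : ∃ᶠ n in atTop, Disjoint B (Ioc n (2 * n)) :=
    frequently_disjoint_powFourBlocks_Ioc.mono fun _ h => h.mono_left hB
  exact hpos.ne' (eq_zero_of_tendsto_countingRatio_of_frequently_disjoint
    (tendsto_countingRatio_of_lowerDensity_eq_upperDensity hdensity) hgaps)
end

section
/- Let X be a topological vector space, T a continuous linear operator on X, and x ∈ X. With M_u^T = {y ∈ X : for every neighborhood U of 0, {n ∈ ℕ : y - T^n u ∈ U} has positive upper density}, the following transitivity holds: if y ∈ M_x^T and x ∈ M_u^T, then y ∈ M_u^T. -/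
/-!
Pick a neighbourhood `V` of `0` with `V + V ⊆ U` and one time `n` with `y - Tⁿ x ∈ V`. Whenever
`x - Tᵐ u` lies in the neighbourhood `(Tⁿ)⁻¹ V`, the identity
`y - Tᵐ⁺ⁿ u = (y - Tⁿ x) + Tⁿ (x - Tᵐ u)` puts `y - Tᵐ⁺ⁿ u` in `U`. So the return times for `U`
contain a translate of a set of positive upper density, and translation costs at most a factor 2
in upper density.
-/

open Filter Topology

def Mset {𝕜 X : Type*} [RCLike 𝕜] [AddCommGroup X] [Module 𝕜 X] [TopologicalSpace X]
    [IsTopologicalAddGroup X] [ContinuousSMul 𝕜 X] (T : X →L[𝕜] X) (x : X) : Set X :=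
  {y | ∀ U ∈ 𝓝 (0 : X), 0 < upperDensity {n : ℕ | y - (T ^ n) x ∈ U}}

namespace upperDensity

open scoped Classical

noncomputable def countUpTo (A : Set ℕ) (n : ℕ) : ℕ :=
  ((Finset.range (n + 1)).filter (fun m => m ∈ A)).card

noncomputable def partialDensity (A : Set ℕ) (n : ℕ) : ℝ :=
  countUpTo A n / n

theorem eq_limsup_partialDensity (A : Set ℕ) :
    upperDensity A = limsup (partialDensity A) atTop := rfl

theorem countUpTo_le (A : Set ℕ) (n : ℕ) : countUpTo A n ≤ n + 1 :=
  (Finset.card_filter_le _ _).trans (Finset.card_range _).le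

theorem countUpTo_le_countUpTo_add {A B : Set ℕ} {n : ℕ} (hAB : ∀ m ∈ A, m + n ∈ B) (N : ℕ) :
    countUpTo A N ≤ countUpTo B (N + n) := by
  refine Finset.card_le_card_of_injOn (· + n) (fun m hm => ?_) (add_left_injective n).injOn
  simp only [Finset.coe_filter, Finset.mem_range, Set.mem_ofPred_eq] at hm ⊢
  exact ⟨by omega, hAB m hm.2⟩

theorem partialDensity_nonneg (A : Set ℕ) (n : ℕ) : 0 ≤ partialDensity A n := by
  unfold partialDensity; positivity

theorem partialDensity_le_two (A : Set ℕ) {n : ℕ} (hn : 1 ≤ n) : partialDensity A n ≤ 2 := by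
  have hn' : (1 : ℝ) ≤ n := by exact_mod_cast hn
  have hcount : (countUpTo A n : ℝ) ≤ n + 1 := by exact_mod_cast countUpTo_le A n
  rw [partialDensity, div_le_iff₀ (by positivity)]
  linarith

theorem isBoundedUnder_partialDensity (A : Set ℕ) :
    IsBoundedUnder (· ≤ ·) atTop (partialDensity A) :=
  isBoundedUnder_of_eventually_le <|
    (eventually_ge_atTop 1).mono fun _ hn => partialDensity_le_two A hn

theorem isCoboundedUnder_partialDensity (A : Set ℕ) :
    IsCoboundedUnder (· ≤ ·) atTop (partialDensity A) :=
  isBoundedUnder_of_eventually_ge (.of_forall (partialDensity_nonneg A)) |>.isCoboundedUnder_le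

theorem half_partialDensity_le_of_add_mem {A B : Set ℕ} {n N : ℕ} (hAB : ∀ m ∈ A, m + n ∈ B)
    (hnN : n ≤ N) : partialDensity A N / 2 ≤ partialDensity B (N + n) := by
  rcases N.eq_zero_or_pos with rfl | hN
  · simpa [partialDensity] using partialDensity_nonneg B (0 + n)
  have hN' : (0 : ℝ) < N := by exact_mod_cast hN
  have hnN' : (n : ℝ) ≤ N := by exact_mod_cast hnN
  have hcount : (countUpTo A N : ℝ) ≤ countUpTo B (N + n) := by
    exact_mod_cast countUpTo_le_countUpTo_add hAB N
  calc partialDensity A N / 2 = countUpTo A N / (N * 2) := div_div _ _ _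
    _ ≤ countUpTo A N / (N + n) := by gcongr; linarith
    _ ≤ partialDensity B (N + n) := by rw [partialDensity]; push_cast; gcongr

end upperDensity

open upperDensity in
theorem half_upperDensity_le_of_add_mem {A B : Set ℕ} (n : ℕ) (hAB : ∀ m ∈ A, m + n ∈ B) :
    upperDensity A / 2 ≤ upperDensity B := by
  refine le_of_forall_lt_imp_le_of_dense fun c hc => ?_
  have hfreq : ∃ᶠ N in atTop, 2 * c < partialDensity A N :=
    frequently_lt_of_lt_limsup (isCoboundedUnder_partialDensity A)
      (by rw [← eq_limsup_partialDensity]; linarith)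
  have hshift : ∃ᶠ N in atTop, c ≤ partialDensity B (N + n) :=
    (hfreq.and_eventually (eventually_ge_atTop n)).mono fun _ ⟨hcN, hnN⟩ =>
      (by linarith : c ≤ partialDensity A _ / 2).trans (half_partialDensity_le_of_add_mem hAB hnN)
  exact le_limsup_of_frequently_le ((tendsto_add_atTop_nat n).frequently hshift)
    (isBoundedUnder_partialDensity B)

theorem upperDensity_empty : upperDensity ∅ = 0 := by
  simp [upperDensity]

theorem nonempty_of_upperDensity_pos {A : Set ℕ} (hA : 0 < upperDensity A) : A.Nonempty := by
  contrapose! hA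
  rw [hA, upperDensity_empty]

theorem Mset_trans {𝕜 X : Type*} [RCLike 𝕜] [AddCommGroup X] [Module 𝕜 X]
    [TopologicalSpace X] [IsTopologicalAddGroup X] [ContinuousSMul 𝕜 X]
    (T : X →L[𝕜] X) (u x y : X) (hy : y ∈ Mset T x) (hx : x ∈ Mset T u) :
    y ∈ Mset T u := by
  intro U hU
  obtain ⟨V, hV, hVU⟩ := exists_nhds_zero_half hU
  obtain ⟨n, hn⟩ := nonempty_of_upperDensity_pos (hy V hV)
  have hW : (T ^ n) ⁻¹' V ∈ 𝓝 (0 : X) := (T ^ n).continuous.tendsto' 0 0 (map_zero _) hV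
  have hshift : ∀ m ∈ {m | x - (T ^ m) u ∈ (T ^ n) ⁻¹' V}, m + n ∈ {k | y - (T ^ k) u ∈ U} := by
    intro m hm
    have hsplit : y - (T ^ (m + n)) u = (y - (T ^ n) x) + (T ^ n) (x - (T ^ m) u) := by
      rw [map_sub, add_comm m n, pow_add, mul_apply_eq_comp]
      abel
    show y - (T ^ (m + n)) u ∈ U
    rw [hsplit]
    exact hVU _ hn _ hm
  have hpos := half_upperDensity_le_of_add_mem n hshift
  linarith [hx _ hW]
end

section
/- Let X be a Banach space, T a bounded linear operator on X, and f a continuous linear functional on X such that |f((T - I)^n x)|^{1/n} → 0 as n → ∞ for every x ∈ X. Then the series F(z) = f(x) + Σ_{n≥1} f((T-I)^n x) · z(z-1)···(z-n+1)/n! converges uniformly on compact subsets of ℂ and defines an entire function of exponential type zero satisfying F(k) = f(T^k x) for every natural number k. -/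
/-!
Put `a n = f ((T - 1) ^ n x)`. The hypothesis says that for every `δ > 0` we have
`‖a n‖ ≤ C_δ δ ^ n`. For `‖z‖ ≤ k` the Newton polynomial satisfies
`|z (z - 1) ⋯ (z - n + 1)| / n! ≤ (k + 1) ⋯ (k + n) / n! = C(n + k, k)`, and
`∑ C(n + k, k) δ ^ n = (1 - δ)⁻¹ ^ (k + 1)`. Hence the Newton series converges uniformly on
compact sets, its sum `F` is entire, and `|F z| ≤ C_δ (1 - δ)⁻¹ ^ (|z| + 2)`, so letting `δ → 0`
shows that `F` has exponential type zero. At `z = k` the series stops at `n = k` with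
coefficients `C(k, n)`, and `∑ C(k, n) (T - 1) ^ n = T ^ k` by the binomial theorem.
-/

open Filter Topology

noncomputable section

def newtonTerm (a : ℕ → ℂ) (n : ℕ) (z : ℂ) : ℂ :=
  a n * (∏ j ∈ Finset.range n, (z - (j : ℂ))) / (n.factorial : ℂ)

def newtonSeries (a : ℕ → ℂ) (z : ℂ) : ℂ :=
  ∑' n, newtonTerm a n z

def maxModulus (F : ℂ → ℂ) (R : ℝ) : ℝ :=
  sSup ((fun z => ‖F z‖) '' Metric.closedBall 0 R)

end

lemma norm_prod_sub_natCast_le {z : ℂ} {k : ℕ} (hz : ‖z‖ ≤ k) (n : ℕ) :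
    ‖∏ j ∈ Finset.range n, (z - (j : ℂ))‖ ≤ n.factorial * (n + k).choose k := by
  calc ‖∏ j ∈ Finset.range n, (z - (j : ℂ))‖
      ≤ ∏ j ∈ Finset.range n, ((k + 1 + j : ℕ) : ℝ) := by
        rw [norm_prod]
        gcongr with j
        calc ‖z - j‖ ≤ ‖z‖ + j := by simpa using norm_sub_le z j
          _ ≤ _ := by push_cast; linarith
    _ = n.factorial * (n + k).choose k := by
        rw [← Nat.cast_prod, ← Nat.ascFactorial_eq_prod_range,
          Nat.ascFactorial_eq_factorial_mul_choose, ← Nat.choose_symm_add, add_comm k n]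
        push_cast; rfl

lemma norm_newtonTerm_le (a : ℕ → ℂ) {z : ℂ} {k : ℕ} (hz : ‖z‖ ≤ k) (n : ℕ) :
    ‖newtonTerm a n z‖ ≤ ‖a n‖ * (n + k).choose k := by
  have hfac : (0 : ℝ) < n.factorial := by positivity
  rw [newtonTerm, norm_div, norm_mul, Complex.norm_natCast, mul_div_assoc]
  gcongr
  rw [div_le_iff₀ hfac, mul_comm]
  exact norm_prod_sub_natCast_le hz n

lemma newtonTerm_natCast (a : ℕ → ℂ) (k n : ℕ) : newtonTerm a n k = k.choose n * a n := by
  have hfac : (n.factorial : ℂ) ≠ 0 := by exact_mod_cast n.factorial_ne_zero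
  rw [newtonTerm, ← descPochhammer_eval_eq_prod_range, descPochhammer_eval_eq_descFactorial,
    Nat.descFactorial_eq_factorial_mul_choose]
  push_cast
  field_simp

lemma newtonSeries_natCast (a : ℕ → ℂ) (k : ℕ) :
    newtonSeries a k = ∑ n ∈ Finset.range (k + 1), k.choose n * a n := by
  rw [newtonSeries, tsum_eq_sum (s := Finset.range (k + 1))]
  · simp only [newtonTerm_natCast]
  · intro n hn
    rw [newtonTerm_natCast, Nat.choose_eq_zero_of_lt (by simpa using hn), Nat.cast_zero, zero_mul]

lemma pow_eq_sum_choose_mul_sub_one_pow {R : Type*} [Ring R] (t : R) (k : ℕ) :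
    t ^ k = ∑ n ∈ Finset.range (k + 1), (k.choose n : R) * (t - 1) ^ n := by
  conv_lhs => rw [← sub_add_cancel t 1, (Commute.one_right (t - 1)).add_pow]
  refine Finset.sum_congr rfl fun n _ => ?_
  rw [one_pow, mul_one, (Nat.cast_commute _ _).eq]

lemma exists_norm_le_mul_pow_of_tendsto_rpow {E : Type*} [NormedAddCommGroup E] {a : ℕ → E}
    (ha : Tendsto (fun n : ℕ => ‖a n‖ ^ (n : ℝ)⁻¹) atTop (𝓝 0)) {δ : ℝ} (hδ : 0 < δ) :
    ∃ C, ∀ n, ‖a n‖ ≤ C * δ ^ n := by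
  have hO : a =O[atTop] (δ ^ ·) := by
    refine Asymptotics.IsBigO.of_bound 1 ?_
    filter_upwards [ha.eventually_lt_const hδ, eventually_ne_atTop 0] with n hn hn0
    rw [norm_pow, Real.norm_of_nonneg hδ.le, one_mul,
      ← Real.rpow_inv_natCast_pow (norm_nonneg (a n)) hn0]
    gcongr
  obtain ⟨C, hC⟩ :=
    (Asymptotics.isBigO_nat_atTop_iff fun n h => absurd h (pow_ne_zero n hδ.ne')).1 hO
  exact ⟨C, fun n => by simpa [abs_of_pos hδ] using hC n⟩

section GeometricMajorant

variable {a : ℕ → ℂ} {C δ : ℝ}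

lemma norm_mul_choose_le_of_le_geometric (hC : ∀ n, ‖a n‖ ≤ C * δ ^ n) (k n : ℕ) :
    ‖a n‖ * (n + k).choose k ≤ C * ((n + k).choose k * δ ^ n) := by
  calc ‖a n‖ * (n + k).choose k ≤ C * δ ^ n * (n + k).choose k := by gcongr; exact hC n
    _ = C * ((n + k).choose k * δ ^ n) := by ring

lemma hasSum_const_mul_choose_mul_geometric (hδ0 : 0 ≤ δ) (hδ1 : δ < 1) (C : ℝ) (k : ℕ) :
    HasSum (fun n : ℕ => C * ((n + k).choose k * δ ^ n)) (C / (1 - δ) ^ (k + 1)) := by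
  rw [div_eq_mul_one_div]
  exact (hasSum_choose_mul_geometric_of_norm_lt_one k
    (by rwa [Real.norm_of_nonneg hδ0])).mul_left C

lemma summable_norm_mul_choose_of_le_geometric (hδ0 : 0 ≤ δ) (hδ1 : δ < 1)
    (hC : ∀ n, ‖a n‖ ≤ C * δ ^ n) (k : ℕ) :
    Summable fun n : ℕ => ‖a n‖ * (n + k).choose k :=
  (hasSum_const_mul_choose_mul_geometric hδ0 hδ1 C k).summable.of_nonneg_of_le
    (fun _ => by positivity) (norm_mul_choose_le_of_le_geometric hC k)

lemma tsum_norm_mul_choose_le_of_le_geometric (hδ0 : 0 ≤ δ) (hδ1 : δ < 1)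
    (hC : ∀ n, ‖a n‖ ≤ C * δ ^ n) (k : ℕ) :
    ∑' n : ℕ, ‖a n‖ * (n + k).choose k ≤ C / (1 - δ) ^ (k + 1) :=
  hasSum_le (norm_mul_choose_le_of_le_geometric hC k)
    (summable_norm_mul_choose_of_le_geometric hδ0 hδ1 hC k).hasSum
    (hasSum_const_mul_choose_mul_geometric hδ0 hδ1 C k)

end GeometricMajorant

lemma norm_newtonSeries_le {a : ℕ → ℂ} {k : ℕ}
    (hs : Summable fun n : ℕ => ‖a n‖ * (n + k).choose k) {z : ℂ} (hz : ‖z‖ ≤ k) :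
    ‖newtonSeries a z‖ ≤ ∑' n : ℕ, ‖a n‖ * (n + k).choose k :=
  tsum_of_norm_bounded hs.hasSum (norm_newtonTerm_le a hz)

section SuperexponentialDecay

variable {a : ℕ → ℂ}

lemma summable_norm_mul_choose
    (ha : Tendsto (fun n : ℕ => ‖a n‖ ^ (n : ℝ)⁻¹) atTop (𝓝 0)) (k : ℕ) :
    Summable fun n : ℕ => ‖a n‖ * (n + k).choose k := by
  obtain ⟨C, hC⟩ := exists_norm_le_mul_pow_of_tendsto_rpow ha one_half_pos
  exact summable_norm_mul_choose_of_le_geometric one_half_pos.le one_half_lt_one hC k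

lemma tendstoUniformlyOn_newtonSeries
    (ha : Tendsto (fun n : ℕ => ‖a n‖ ^ (n : ℝ)⁻¹) atTop (𝓝 0))
    {K : Set ℂ} (hK : IsCompact K) :
    TendstoUniformlyOn (fun N z => ∑ n ∈ Finset.range N, newtonTerm a n z) (newtonSeries a)
      atTop K := by
  obtain ⟨R, hKR⟩ := hK.isBounded.subset_closedBall 0
  obtain ⟨k, hRk⟩ := exists_nat_ge R
  refine tendstoUniformlyOn_tsum_nat (summable_norm_mul_choose ha k) fun n z hz => ?_
  exact norm_newtonTerm_le a ((mem_closedBall_zero_iff.1 (hKR hz)).trans hRk) n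

lemma differentiable_newtonSeries
    (ha : Tendsto (fun n : ℕ => ‖a n‖ ^ (n : ℝ)⁻¹) atTop (𝓝 0)) :
    Differentiable ℂ (newtonSeries a) := by
  intro z
  obtain ⟨k, hzk⟩ := exists_nat_gt ‖z‖
  have hdiff : DifferentiableOn ℂ (newtonSeries a) (Metric.ball 0 k) :=
    Complex.differentiableOn_tsum_of_summable_norm (summable_norm_mul_choose ha k)
      (fun n => by unfold newtonTerm; fun_prop) Metric.isOpen_ball
      fun n w hw => norm_newtonTerm_le a (mem_ball_zero_iff.1 hw).le n
  exact hdiff.differentiableAt (Metric.isOpen_ball.mem_nhds (mem_ball_zero_iff.2 hzk))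

lemma exists_norm_newtonSeries_le_mul_exp
    (ha : Tendsto (fun n : ℕ => ‖a n‖ ^ (n : ℝ)⁻¹) atTop (𝓝 0))
    {ε : ℝ} (hε : 0 < ε) :
    ∃ C, ∀ R, 0 ≤ R → ∀ z ∈ Metric.closedBall (0 : ℂ) R,
      ‖newtonSeries a z‖ ≤ C * Real.exp (ε * R) := by
  -- `δ` is chosen so that `1 / (1 - δ) = exp ε`.
  set δ := 1 - Real.exp (-ε)
  have hδ0 : 0 < δ := by simpa [δ] using hε
  have hδ1 : δ < 1 := by simpa [δ] using Real.exp_pos (-ε)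
  obtain ⟨C, hC⟩ := exists_norm_le_mul_pow_of_tendsto_rpow ha hδ0
  have hC0 : 0 ≤ C := by simpa using (norm_nonneg _).trans (hC 0)
  refine ⟨C * Real.exp (2 * ε), fun R hR z hz => ?_⟩
  set k := ⌈R⌉₊
  have hzk : ‖z‖ ≤ k := (mem_closedBall_zero_iff.1 hz).trans (Nat.le_ceil R)
  have hkR : (k : ℝ) ≤ R + 1 := (Nat.ceil_lt_add_one hR).le
  calc ‖newtonSeries a z‖ ≤ ∑' n : ℕ, ‖a n‖ * (n + k).choose k :=
        norm_newtonSeries_le (summable_norm_mul_choose ha k) hzk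
    _ ≤ C / (1 - δ) ^ (k + 1) := tsum_norm_mul_choose_le_of_le_geometric hδ0.le hδ1 hC k
    _ = C * Real.exp (ε * (k + 1)) := by
        rw [sub_sub_cancel, ← Real.exp_nat_mul, div_eq_mul_inv, ← Real.exp_neg]
        push_cast; ring_nf
    _ ≤ C * Real.exp (ε * (R + 2)) := by gcongr C * Real.exp (ε * ?_); linarith
    _ = C * Real.exp (2 * ε) * Real.exp (ε * R) := by rw [mul_assoc, ← Real.exp_add]; ring_nf

end SuperexponentialDecay

lemma tendsto_div_atTop_nhds_zero_of_le_add_mul {g : ℝ → ℝ}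
    (hlow : ∃ c, ∀ᶠ R in atTop, c ≤ g R) (hup : ∀ ε > 0, ∃ C, ∀ᶠ R in atTop, g R ≤ C + ε * R) :
    Tendsto (fun R => g R / R) atTop (𝓝 0) := by
  obtain ⟨c, hc⟩ := hlow
  refine tendsto_order.2 ⟨fun b hb => ?_, fun b hb => ?_⟩
  · have hcR : Tendsto (fun R : ℝ => c / R) atTop (𝓝 0) := tendsto_const_nhds.div_atTop tendsto_id
    filter_upwards [hcR.eventually_const_lt hb, hc, eventually_gt_atTop 0] with R hbR hgR hR
    exact hbR.trans_le (div_le_div_of_nonneg_right hgR hR.le)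
  · obtain ⟨C, hC⟩ := hup (b / 2) (half_pos hb)
    have hCR : Tendsto (fun R : ℝ => C / R + b / 2) atTop (𝓝 (0 + b / 2)) :=
      (tendsto_const_nhds.div_atTop tendsto_id).add_const _
    rw [zero_add] at hCR
    filter_upwards [hCR.eventually_lt_const (half_lt_self hb), hC, eventually_gt_atTop 0]
      with R hbR hgR hR
    calc g R / R ≤ (C + b / 2 * R) / R := div_le_div_of_nonneg_right hgR hR.le
      _ = C / R + b / 2 := by field_simp
      _ < b := hbR

section MaxModulus

variable {F : ℂ → ℂ} {R B : ℝ}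

lemma maxModulus_nonneg (F : ℂ → ℂ) (R : ℝ) : 0 ≤ maxModulus F R :=
  Real.sSup_nonneg (by rintro _ ⟨z, -, rfl⟩; exact norm_nonneg _)

lemma maxModulus_le (hR : 0 ≤ R) (hB : ∀ z ∈ Metric.closedBall 0 R, ‖F z‖ ≤ B) :
    maxModulus F R ≤ B :=
  csSup_le ((Metric.nonempty_closedBall.2 hR).image _) (by rintro _ ⟨z, hz, rfl⟩; exact hB z hz)

lemma norm_le_maxModulus (hB : ∀ z ∈ Metric.closedBall 0 R, ‖F z‖ ≤ B) {z : ℂ}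
    (hz : z ∈ Metric.closedBall 0 R) : ‖F z‖ ≤ maxModulus F R :=
  le_csSup ⟨B, by rintro _ ⟨w, hw, rfl⟩; exact hB w hw⟩ ⟨z, hz, rfl⟩

lemma tendsto_log_maxModulus_div_atTop
    (hF : ∀ ε > 0, ∃ C, ∀ R, 0 ≤ R → ∀ z ∈ Metric.closedBall (0 : ℂ) R,
      ‖F z‖ ≤ C * Real.exp (ε * R)) :
    Tendsto (fun R => Real.log (maxModulus F R) / R) atTop (𝓝 0) := by
  refine tendsto_div_atTop_nhds_zero_of_le_add_mul ?_ fun ε hε => ?_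
  · by_cases hF0 : ∃ z₀, F z₀ ≠ 0
    · obtain ⟨z₀, hz₀⟩ := hF0
      obtain ⟨C, hC⟩ := hF 1 one_pos
      refine ⟨Real.log ‖F z₀‖, (eventually_ge_atTop ‖z₀‖).mono fun R hR => ?_⟩
      exact Real.log_le_log (norm_pos_iff.2 hz₀)
        (norm_le_maxModulus (hC R ((norm_nonneg _).trans hR)) (mem_closedBall_zero_iff.2 hR))
    · refine ⟨0, (eventually_ge_atTop 0).mono fun R hR => ?_⟩
      have hM : maxModulus F R = 0 := le_antisymm
        (maxModulus_le hR fun z _ => by simp [not_exists_not.1 hF0 z]) (maxModulus_nonneg F R)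
      rw [hM, Real.log_zero]
  · obtain ⟨C, hC⟩ := hF ε hε
    -- `max C 1` keeps the bound valid when `maxModulus F R = 0`, where `Real.log` is junk `0`.
    have hC1 : 0 ≤ Real.log (max C 1) := Real.log_nonneg (le_max_right C 1)
    refine ⟨Real.log (max C 1), (eventually_ge_atTop 0).mono fun R hR => ?_⟩
    have hM : maxModulus F R ≤ Real.exp (Real.log (max C 1) + ε * R) := by
      rw [Real.exp_add, Real.exp_log (by positivity)]
      exact maxModulus_le hR fun z hz => (hC R hR z hz).trans (by gcongr; exact le_max_left C 1)
    rcases (maxModulus_nonneg F R).eq_or_lt with h0 | hpos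
    · rw [← h0, Real.log_zero]
      positivity
    · exact (Real.log_le_iff_le_exp hpos).2 hM

end MaxModulus

theorem interpolating_entire_function_of_type_zero_general
    {X : Type*} [NormedAddCommGroup X] [NormedSpace ℂ X]
    (T : X →L[ℂ] X) (f : X →L[ℂ] ℂ)
    (hf : ∀ x : X, Tendsto (fun n : ℕ => ‖f (((T - 1) ^ n) x)‖ ^ ((n : ℝ)⁻¹))
      atTop (𝓝 0))
    (x : X) :
    ∃ F : ℂ → ℂ,
      (∀ K : Set ℂ, IsCompact K →
        TendstoUniformlyOn
          (fun N : ℕ => fun z : ℂ =>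
            f x + ∑ n ∈ Finset.Icc 1 N,
              f (((T - 1) ^ n) x) * (∏ j ∈ Finset.range n, (z - (j : ℂ))) / (n.factorial : ℂ))
          F atTop K) ∧
      Differentiable ℂ F ∧
      Tendsto
        (fun R : ℝ => Real.log (sSup ((fun z => ‖F z‖) '' Metric.closedBall 0 R)) / R)
        atTop (𝓝 0) ∧
      (∀ k : ℕ, F (k : ℂ) = f ((T ^ k) x)) := by
  set a : ℕ → ℂ := fun n => f (((T - 1) ^ n) x)
  have ha : Tendsto (fun n : ℕ => ‖a n‖ ^ (n : ℝ)⁻¹) atTop (𝓝 0) := hf x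
  have hpartial : ∀ N z, f x + ∑ n ∈ Finset.Icc 1 N, newtonTerm a n z =
      ∑ n ∈ Finset.range (N + 1), newtonTerm a n z := fun N z => by
    rw [Finset.range_eq_Ico, Finset.sum_eq_sum_Ico_succ_bot N.succ_pos, zero_add,
      Nat.succ_eq_add_one, Finset.Ico_add_one_right_eq_Icc]
    simp [newtonTerm, a]
  refine ⟨newtonSeries a, fun K hK => ?_, differentiable_newtonSeries ha,
    tendsto_log_maxModulus_div_atTop fun ε => exists_norm_newtonSeries_le_mul_exp ha, fun k => ?_⟩
  · have hK' := tendstoUniformlyOn_newtonSeries ha hK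
    exact TendstoUniformlyOn.congr (fun u hu => (tendsto_add_atTop_nat 1).eventually (hK' u hu))
      (Eventually.of_forall fun N z _ => (hpartial N z).symm)
  · simp [newtonSeries_natCast, pow_eq_sum_choose_mul_sub_one_pow T k, a]

theorem interpolating_entire_function_of_type_zero
    {X : Type*} [NormedAddCommGroup X] [NormedSpace ℂ X] [CompleteSpace X]
    (T : X →L[ℂ] X) (f : X →L[ℂ] ℂ)
    (hf : ∀ x : X, Tendsto (fun n : ℕ => ‖f (((T - 1) ^ n) x)‖ ^ ((n : ℝ)⁻¹))
      atTop (𝓝 0))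
    (x : X) :
    ∃ F : ℂ → ℂ,
      (∀ K : Set ℂ, IsCompact K →
        TendstoUniformlyOn
          (fun N : ℕ => fun z : ℂ =>
            f x + ∑ n ∈ Finset.Icc 1 N,
              f (((T - 1) ^ n) x) * (∏ j ∈ Finset.range n, (z - (j : ℂ))) / (n.factorial : ℂ))
          F atTop K) ∧
      Differentiable ℂ F ∧
      Tendsto
        (fun R : ℝ => Real.log (sSup ((fun z => ‖F z‖) '' Metric.closedBall 0 R)) / R)
        atTop (𝓝 0) ∧
      (∀ k : ℕ, F (k : ℂ) = f ((T ^ k) x)) :=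
  interpolating_entire_function_of_type_zero_general T f hf x
end
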